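/- arXiv:math/0309075 — 3 statements merged into one kernel-verified Lean document; each statement's English description precedes it below -/
import Mathlib

section
/- For every integer m ≥ 2 and variables z_1, ..., z_m in a commutative ring, the sum over all trees T on the vertex set {1, ..., m} of the monomial z_1^{val_T(1)} · ... · z_m^{val_T(m)}, where val_T(i) denotes the degree (valence) of vertex i in T, equals z_1 ⋯ z_m (z_1 + ⋯ + z_m)^{m-2}. -/
/-!
Group the trees by their degree sequence `d`; write `d v = k v + 1`. The degrees of a tree on
`m ≥ 2` vertices are positive and sum to `2 (m - 1)`, so some vertex `l` has degree one. Removing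
that leaf is a bijection from the trees with degree sequence `d` onto the pairs `(j, T)` with
`T` a tree on the other vertices whose degree sequence is `d` lowered by one at `j`. This is
Pascal's recursion for multinomial coefficients, so there are `multinomial k` trees with degree
sequence `k + 1`, and the multinomial theorem sums their monomials to
`(∏ z) * (∑ z) ^ (m - 2)`.
-/

open Classical

open SimpleGraph Finset Nat

theorem Fintype.prod_factorial_sub_one_eq_mul {ι : Type*} [Fintype ι] [DecidableEq ι]
    (f : ι → ℕ) {j : ι} (hj : 2 ≤ f j) :
    ∏ i, (f i - 1)! = (f j - 1) * ∏ i, (f i - (if i = j then 1 else 0) - 1)! := by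
  rw [Fintype.prod_eq_mul_prod_compl j, Fintype.prod_eq_mul_prod_compl j, if_pos rfl, ← mul_assoc,
    mul_factorial_pred (by omega)]
  congr 1
  exact Finset.prod_congr rfl fun i hi => by rw [if_neg (by simpa using hi), tsub_zero]

theorem Fintype.exists_eq_one_of_sum_lt_two_mul_card {ι : Type*} [Fintype ι] {f : ι → ℕ}
    (hf : ∀ i, 1 ≤ f i) (hsum : ∑ i, f i < 2 * Fintype.card ι) : ∃ i, f i = 1 := by
  obtain ⟨i, -, hi⟩ := exists_lt_of_sum_lt (s := univ) (f := f) (g := fun _ => 2)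
    (by simpa [mul_comm] using hsum)
  exact ⟨i, by have := hf i; omega⟩

namespace SimpleGraph

variable {V : Type*} {G : SimpleGraph V} {l : V}

theorem connected_of_connected_induce_compl_singleton (h : (G.induce {l}ᶜ).Connected)
    {j : V} (hj : G.Adj l j) : G.Connected := by
  refine (connected_iff_exists_forall_reachable G).mpr ⟨l, fun v => ?_⟩
  by_cases hv : v = l
  · exact hv ▸ Reachable.rfl
  · exact hj.reachable.trans ((h ⟨j, hj.ne.symm⟩ ⟨v, hv⟩).map (Embedding.induce _).toHom)

theorem isAcyclic_of_isAcyclic_induce_compl_singleton (h : (G.induce {l}ᶜ).IsAcyclic)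
    (hl : (G.neighborSet l).Subsingleton) : G.IsAcyclic := by
  intro u c hc
  by_cases hu : u = l
  · subst hu
    exact hc.snd_ne_penultimate (hl (c.adj_snd hc.not_nil) (c.adj_penultimate hc.not_nil).symm)
  · have hsupp : ∀ x ∈ c.support, x ∈ ({l}ᶜ : Set V) := fun x hx hxl =>
      hc.isTrail.not_mem_support_of_subsingleton_neighborSet (Ne.symm hu) (Ne.symm hu)
        (hxl ▸ hl) (Set.mem_singleton_iff.mp hxl ▸ hx)
    exact h _ (Walk.IsCycle.of_map (p := c.induce _ hsupp) (f := (Embedding.induce _).toHom)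
      (by rwa [Walk.map_induce]))

theorem isTree_iff_isTree_induce_compl_singleton (hl : ∃! w, G.Adj l w) :
    G.IsTree ↔ (G.induce {l}ᶜ).IsTree := by
  obtain ⟨j, hj, huniq⟩ := hl
  have hsub : (G.neighborSet l).Subsingleton := fun a ha b hb =>
    (huniq a ha).trans (huniq b hb).symm
  refine ⟨fun h => ⟨?_, h.isAcyclic.induce _⟩, fun h => ⟨?_, ?_⟩⟩
  · have : Nonempty ({l}ᶜ : Set V) := ⟨⟨j, hj.ne.symm⟩⟩
    exact ⟨h.preconnected.induce_of_degree_eq_one fun v hv => by rwa [not_not.mp hv]⟩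
  · exact connected_of_connected_induce_compl_singleton h.connected hj
  · exact isAcyclic_of_isAcyclic_induce_compl_singleton h.isAcyclic hsub

theorem degree_eq_degree_induce_compl_singleton_add (v : ({l}ᶜ : Set V))
    [Fintype (G.neighborSet v)] [Fintype ((G.induce {l}ᶜ).neighborSet v)] :
    G.degree v = (G.induce {l}ᶜ).degree v + if G.Adj v l then 1 else 0 := by
  have hmap : ((G.induce {l}ᶜ).neighborFinset v).map (.subtype _) =
      (G.neighborFinset v).erase l := by
    ext; simp [and_comm]
  rw [← card_neighborFinset_eq_degree (G := G.induce _), ← card_map, hmap, card_erase_eq_ite]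
  simp only [mem_neighborFinset, card_neighborFinset_eq_degree]
  split_ifs with h
  · have := (G.degree_pos_iff_exists_adj v).mpr ⟨l, h⟩; omega
  · rfl

variable (l) in
def attachLeaf (T : SimpleGraph ({l}ᶜ : Set V)) (j : ({l}ᶜ : Set V)) : SimpleGraph V :=
  T.map Subtype.val ⊔ edge j l

section attachLeaf

variable {T : SimpleGraph ({l}ᶜ : Set V)} {j : ({l}ᶜ : Set V)}

theorem attachLeaf_adj_leaf {w : V} : (attachLeaf l T j).Adj l w ↔ w = j := by
  obtain ⟨j, hj : j ≠ l⟩ := j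
  simp only [attachLeaf, sup_adj, map_adj', edge_adj, Subtype.exists]
  grind

theorem induce_attachLeaf : (attachLeaf l T j).induce {l}ᶜ = T := by
  ext ⟨u, hu : u ≠ l⟩ ⟨v, hv : v ≠ l⟩
  simp only [attachLeaf, comap_adj, Function.Embedding.subtype_apply, sup_adj, map_adj',
    edge_adj, Subtype.exists]
  grind [T.ne_of_adj]

theorem attachLeaf_induce {S : SimpleGraph V} (hS : ∀ w, S.Adj l w ↔ w = j) :
    attachLeaf l (S.induce {l}ᶜ) j = S := by
  ext u v
  obtain ⟨j, hj : j ≠ l⟩ := j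
  simp only [attachLeaf, comap_adj, Function.Embedding.subtype_apply, sup_adj, map_adj',
    edge_adj, Subtype.exists]
  have := hS u
  have := hS v
  grind [S.adj_comm, S.ne_of_adj]

theorem existsUnique_attachLeaf_adj_leaf : ∃! w, (attachLeaf l T j).Adj l w :=
  ⟨j, attachLeaf_adj_leaf.mpr rfl, fun _ => attachLeaf_adj_leaf.mp⟩

theorem IsTree.attachLeaf (hT : T.IsTree) : (attachLeaf l T j).IsTree :=
  (isTree_iff_isTree_induce_compl_singleton existsUnique_attachLeaf_adj_leaf).mpr
    (by rwa [induce_attachLeaf])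

theorem degree_attachLeaf_leaf [Fintype ((attachLeaf l T j).neighborSet l)] :
    (attachLeaf l T j).degree l = 1 :=
  degree_eq_one_iff_existsUnique_adj.mpr existsUnique_attachLeaf_adj_leaf

theorem degree_attachLeaf [Fintype V] [DecidableEq V] (v : ({l}ᶜ : Set V)) :
    (attachLeaf l T j).degree v = T.degree v + if v = j then 1 else 0 := by
  have hadj : (attachLeaf l T j).Adj v l ↔ v = j := by
    rw [adj_comm, attachLeaf_adj_leaf, Subtype.ext_iff]
  rw [degree_eq_degree_induce_compl_singleton_add (l := l) v]
  simp only [hadj]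
  congr 1
  convert rfl using 2
  exact induce_attachLeaf.symm

end attachLeaf

variable (V) in
noncomputable def treesWithDegrees [Fintype V] [DecidableEq V] (d : V → ℕ) :
    Finset (SimpleGraph V) :=
  {T | T.IsTree ∧ ∀ v, T.degree v = d v}

variable [Fintype V]

theorem IsTree.sum_degree_sub_one [Nontrivial V] {T : SimpleGraph V} (hT : T.IsTree) :
    ∑ v, (T.degree v - 1) = Fintype.card V - 2 := by
  have hpos (v : V) : 1 ≤ T.degree v := hT.preconnected.degree_pos_of_nontrivial v
  have hedges := hT.card_edgeFinset
  rw [sum_tsub_distrib _ fun v _ => hpos v, sum_degrees_eq_twice_card_edges]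
  simp only [sum_const, Finset.card_univ, smul_eq_mul, mul_one]
  omega

variable [DecidableEq V] {d : V → ℕ}

@[simp]
theorem mem_treesWithDegrees {T : SimpleGraph V} :
    T ∈ treesWithDegrees V d ↔ T.IsTree ∧ ∀ v, T.degree v = d v := by
  simp [treesWithDegrees]

theorem treesWithDegrees_eq_empty [Nontrivial V] {v : V} (hv : d v = 0) :
    treesWithDegrees V d = ∅ :=
  eq_empty_of_forall_notMem fun _ hT => by
    obtain ⟨hT, hdeg⟩ := mem_treesWithDegrees.mp hT
    have hpos := hT.preconnected.degree_pos_of_nontrivial v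
    rw [hdeg, hv] at hpos
    exact Nat.lt_irrefl 0 hpos

theorem card_treesWithDegrees_zero_of_subsingleton [Subsingleton V] [Nonempty V] :
    #(treesWithDegrees V 0) = 1 := by
  refine card_eq_one.mpr ⟨⊥, eq_singleton_iff_unique_mem.mpr ⟨?_, fun _ _ => ?_⟩⟩
  · exact mem_treesWithDegrees.mpr ⟨.of_subsingleton, fun v => by simp⟩
  · ext u v
    simp [Subsingleton.elim u v]

theorem card_treesWithDegrees_eq_sum (hd : ∀ v, 1 ≤ d v) (hl : d l = 1) :
    #(treesWithDegrees V d) = ∑ j : ({l}ᶜ : Set V),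
      #(treesWithDegrees _ fun v : ({l}ᶜ : Set V) => d v - if v = j then 1 else 0) := by
  rw [← card_sigma]
  refine (card_bij (fun p _ => attachLeaf l p.2 p.1) ?_ ?_ ?_).symm
  · rintro ⟨j, T⟩ hT
    obtain ⟨hT, hTd⟩ := mem_treesWithDegrees.mp (mem_sigma.mp hT).2
    refine mem_treesWithDegrees.mpr ⟨hT.attachLeaf, fun v => ?_⟩
    rcases eq_or_ne v l with rfl | (hv : v ∈ ({l}ᶜ : Set V))
    · rw [degree_attachLeaf_leaf, hl]
    · have hdeg := degree_attachLeaf (T := T) (j := j) ⟨v, hv⟩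
      rw [hTd] at hdeg
      have := hd v
      dsimp only at hdeg ⊢
      split_ifs at hdeg <;> omega
  · rintro ⟨j, T⟩ - ⟨j', T'⟩ - h
    obtain rfl : j = j' := Subtype.ext (attachLeaf_adj_leaf.mp (h ▸ attachLeaf_adj_leaf.mpr rfl))
    obtain rfl : T = T' := by rw [← induce_attachLeaf (T := T) (j := j), h, induce_attachLeaf]
    rfl
  · intro S hS
    obtain ⟨hS, hSd⟩ := mem_treesWithDegrees.mp hS
    obtain ⟨j, hj, huniq⟩ := degree_eq_one_iff_existsUnique_adj.mp ((hSd l).trans hl)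
    have hSl : ∀ w, S.Adj l w ↔ w = (⟨j, hj.ne.symm⟩ : ({l}ᶜ : Set V)) :=
      fun w => ⟨huniq w, fun h => h ▸ hj⟩
    refine ⟨⟨⟨j, hj.ne.symm⟩, S.induce {l}ᶜ⟩, mem_sigma.mpr ⟨mem_univ _, ?_⟩,
      attachLeaf_induce hSl⟩
    refine mem_treesWithDegrees.mpr
      ⟨(isTree_iff_isTree_induce_compl_singleton ⟨j, hj, huniq⟩).mp hS, fun v => ?_⟩
    have := degree_eq_degree_induce_compl_singleton_add (G := S) v
    rw [hSd, adj_comm, hSl, ← Subtype.ext_iff] at this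
    -- the two sides differ only in the `Fintype` instances on the neighbour sets
    convert Nat.eq_sub_of_add_eq this.symm

theorem card_treesWithDegrees_mul_prod_eq_sum (hd : ∀ v, 1 ≤ d v) (hl : d l = 1) :
    #(treesWithDegrees V d) * ∏ v, (d v - 1)! = ∑ j : ({l}ᶜ : Set V),
      #(treesWithDegrees _ fun v : ({l}ᶜ : Set V) => d v - if v = j then 1 else 0) *
        ∏ v : ({l}ᶜ : Set V), (d v - 1)! := by
  rw [card_treesWithDegrees_eq_sum hd hl, sum_mul, Fintype.prod_eq_mul_prod_subtype_ne _ l, hl,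
    tsub_self, factorial_zero, one_mul]
  rfl

theorem card_treesWithDegrees_mul_prod_factorial_of_card_eq_two (hV : Fintype.card V = 2)
    (hd : ∀ v, 1 ≤ d v) (hsum : ∑ v, d v = 2) :
    #(treesWithDegrees V d) * ∏ v, (d v - 1)! = 1 := by
  obtain ⟨l, hl⟩ := Fintype.exists_eq_one_of_sum_lt_two_mul_card hd (by omega)
  obtain ⟨j, hj⟩ : ∃ j : ({l}ᶜ : Set V), ∀ v, v = j :=
    Fintype.card_eq_one_iff.mp ((Set.card_ne_eq l).trans (by omega))
  have : Subsingleton ({l}ᶜ : Set V) := ⟨fun u v => (hj u).trans (hj v).symm⟩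
  have : Nonempty ({l}ᶜ : Set V) := ⟨j⟩
  have hdj : d j = 1 := by
    have : ∑ v, d v = d l + ∑ v : ({l}ᶜ : Set V), d v := Fintype.sum_eq_add_sum_subtype_ne d l
    rw [Fintype.sum_subsingleton _ j] at this
    omega
  have hzero : (fun v : ({l}ᶜ : Set V) => d v - if v = j then 1 else 0) = 0 :=
    funext fun v => by rw [hj v, if_pos rfl, hdj]; rfl
  rw [card_treesWithDegrees_mul_prod_eq_sum hd hl, Fintype.sum_subsingleton _ j,
    Fintype.prod_subsingleton _ j, hzero, card_treesWithDegrees_zero_of_subsingleton, hdj]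
  rfl

/-- The term of the leaf recursion for the neighbour `j`: `d` is a degree sequence restricted to
the vertices other than the leaf (hence `hsum`), and `hcount` is the induction hypothesis. -/
theorem card_treesWithDegrees_sub_single_mul_prod (hV : 2 ≤ Fintype.card V)
    (hd : ∀ v, 1 ≤ d v) (hsum : ∑ v, d v = 2 * Fintype.card V - 1)
    (hcount : ∀ d' : V → ℕ, (∀ v, 1 ≤ d' v) → ∑ v, d' v = 2 * (Fintype.card V - 1) →
      #(treesWithDegrees V d') * ∏ v, (d' v - 1)! = (Fintype.card V - 2)!) (j : V) :
    #(treesWithDegrees V fun v => d v - if v = j then 1 else 0) * ∏ v, (d v - 1)! =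
      (d j - 1) * (Fintype.card V - 2)! := by
  have : Nontrivial V := Fintype.one_lt_card_iff_nontrivial.mp hV
  by_cases hj : d j = 1
  · rw [treesWithDegrees_eq_empty (v := j) (by simp [hj]), card_empty, zero_mul, hj, tsub_self,
      zero_mul]
  have hle (v : V) : (if v = j then 1 else 0) ≤ d v := by
    have := hd v; split_ifs <;> omega
  have hdj (v : V) : 1 ≤ d v - if v = j then 1 else 0 := by
    have := hd v; split_ifs with h <;> [subst h; skip] <;> omega
  have hsumj : ∑ v, (d v - if v = j then 1 else 0) = 2 * (Fintype.card V - 1) := by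
    rw [sum_tsub_distrib _ fun v _ => hle v, Fintype.sum_ite_eq']
    omega
  rw [Fintype.prod_factorial_sub_one_eq_mul d (j := j) (by have := hd j; omega), mul_left_comm,
    hcount _ hdj hsumj]

theorem card_treesWithDegrees_mul_prod_factorial (hV : 2 ≤ Fintype.card V) (hd : ∀ v, 1 ≤ d v)
    (hsum : ∑ v, d v = 2 * (Fintype.card V - 1)) :
    #(treesWithDegrees V d) * ∏ v, (d v - 1)! = (Fintype.card V - 2)! := by
  obtain ⟨n, hn⟩ : ∃ n, Fintype.card V = n + 2 := ⟨_, (Nat.sub_add_cancel hV).symm⟩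
  induction n generalizing V with
  | zero => rw [hn]; exact card_treesWithDegrees_mul_prod_factorial_of_card_eq_two hn hd (by omega)
  | succ n ih =>
    obtain ⟨l, hl⟩ := Fintype.exists_eq_one_of_sum_lt_two_mul_card hd (by omega)
    have hsplit (f : V → ℕ) : ∑ v, f v = f l + ∑ v : ({l}ᶜ : Set V), f v :=
      Fintype.sum_eq_add_sum_subtype_ne f l
    have hV' : Fintype.card ({l}ᶜ : Set V) = n + 2 := (Set.card_ne_eq l).trans (by omega)
    have hterm (j : ({l}ᶜ : Set V)) :=
      card_treesWithDegrees_sub_single_mul_prod (V := ({l}ᶜ : Set V)) (d := fun v => d v)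
        (by omega) (fun v => hd v) (by have := hsplit d; omega)
        (fun d' hd' hsum' => ih (by omega) hd' hsum' hV') j
    have hexcess : ∑ j : ({l}ᶜ : Set V), (d j - 1) = n + 1 := by
      have := hsplit (fun v => d v - 1)
      rw [sum_tsub_distrib _ fun v _ => hd v, hl, sum_const, Finset.card_univ, smul_eq_mul,
        mul_one] at this
      omega
    rw [card_treesWithDegrees_mul_prod_eq_sum hd hl, sum_congr rfl fun j _ => hterm j, ← sum_mul,
      hexcess, hV', hn]
    rfl

theorem card_treesWithDegrees_add_one (hV : 2 ≤ Fintype.card V) {k : V → ℕ}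
    (hk : ∑ v, k v = Fintype.card V - 2) :
    #(treesWithDegrees V (k + 1)) = Nat.multinomial univ k := by
  have hcount := card_treesWithDegrees_mul_prod_factorial (d := k + 1) hV (fun _ => by simp)
    (by simp only [Pi.add_apply, Pi.one_apply, sum_add_distrib, hk, sum_const, Finset.card_univ,
      smul_eq_mul, mul_one]; omega)
  simp only [Pi.add_apply, Pi.one_apply, add_tsub_cancel_right] at hcount
  have hspec := Nat.multinomial_spec univ k
  rw [hk, ← hcount, mul_comm] at hspec
  exact Nat.eq_of_mul_eq_mul_right (prod_pos fun v _ => factorial_pos (k v)) hspec.symm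

theorem filter_isTree_degree_sub_one_eq_treesWithDegrees [Nontrivial V] (k : V → ℕ) :
    {T ∈ ({T | T.IsTree} : Finset (SimpleGraph V)) | (fun v => T.degree v - 1) = k} =
      treesWithDegrees V (k + 1) := by
  ext T
  simp only [mem_filter, mem_univ, true_and, mem_treesWithDegrees, funext_iff, Pi.add_apply,
    Pi.one_apply]
  refine and_congr_right fun hT => forall_congr' fun v => ?_
  have := hT.preconnected.degree_pos_of_nontrivial v
  omega

end SimpleGraph

/-- **Cayley's degree generating function for labeled trees.**
For `m ≥ 2` and variables `z 1, …, z m` in a commutative ring, the sum over all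
trees `T` on the vertex set `Fin m` of `∏ i, (z i) ^ (degree of i in T)` equals
`z 1 ⋯ z m · (z 1 + ⋯ + z m) ^ (m - 2)`. -/
theorem cayley_degree_generating_function {R : Type*} [CommRing R]
    (m : ℕ) (hm : 2 ≤ m) (z : Fin m → R) :
    ∑ G ∈ Finset.univ.filter (fun G : SimpleGraph (Fin m) => G.IsTree),
      ∏ i : Fin m, z i ^ G.degree i
    = (∏ i : Fin m, z i) * (∑ i : Fin m, z i) ^ (m - 2) := by
  have : Nontrivial (Fin m) := Fin.nontrivial_iff_two_le.mpr hm
  have hmaps : ∀ T ∈ Finset.univ.filter (fun G : SimpleGraph (Fin m) => G.IsTree),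
      (fun i => T.degree i - 1) ∈ piAntidiag univ (m - 2) := fun T hT => by
    simpa using (mem_filter.mp hT).2.sum_degree_sub_one
  rw [← sum_fiberwise_of_maps_to hmaps, sum_pow_eq_sum_piAntidiag, mul_sum]
  refine sum_congr rfl fun k hk => ?_
  have hk : ∑ i, k i = Fintype.card (Fin m) - 2 := by simpa using (mem_piAntidiag.mp hk).1
  have hfiber : ∀ T ∈ treesWithDegrees (Fin m) (k + 1),
      ∏ i, z i ^ T.degree i = ∏ i, z i ^ (k i + 1) := fun T hT =>
    prod_congr rfl fun i _ => by rw [(mem_treesWithDegrees.mp hT).2 i, Pi.add_apply, Pi.one_apply]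
  rw [filter_isTree_degree_sub_one_eq_treesWithDegrees, sum_congr rfl hfiber, sum_const,
    card_treesWithDegrees_add_one (by simpa using hm) hk, nsmul_eq_mul]
  simp only [pow_succ, prod_mul_distrib]
  ring
end

section
/- Let m ≥ 2 and let v be an integer with 1 ≤ v ≤ m-1. Then the number of trees on the vertex set {1, ..., m} in which vertex 1 has degree exactly v equals binomial(m-2, v-1) · (m-1)^{m-1-v}. -/
/-!
Root the trees at `r`. A rooted tree is the same thing as its parent map `p`, which fixes `r`
and along which every vertex reaches `r`; the degree of `r` is the number of root children
`x ≠ r` with `p x = r`. Let `P v` count parent maps with `v` root children, on `N + 1`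
vertices. From a map with `v + 1` root children, cut a root child `c` off the root and hang it
below a non-root vertex `w` outside its subtree: since the subtrees of the root children
partition the `N` non-root vertices, there are `N v` such moves. Every map with `v` root
children and a marked non-root vertex whose parent is not the root (`N - v` choices) arises
exactly once, so `P (v + 1) N v = P v (N - v)`. With `P N = 1` (only the star) this solves to
`P v = C(N - 1, v - 1) N ^ (N - v)`.
-/

open Classical

open Finset Function Relation

section ParentMap

variable {α : Type*} {p : α → α} {r c w x y z : α}

abbrev IsDescendant (p : α → α) : α → α → Prop := ReflTransGen fun a b => p a = b

structure IsParentMap (p : α → α) (r : α) : Prop where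
  map_root : p r = r
  isDescendant_root : ∀ x, IsDescendant p x r

theorem IsDescendant.eq_of_isFixedPt (hr : IsFixedPt p r) (h : IsDescendant p r x) : x = r := by
  induction h with
  | refl => rfl
  | tail _ hstep ih => subst ih; exact hstep.symm.trans hr

theorem IsDescendant.total (hy : IsDescendant p x y) (hz : IsDescendant p x z) :
    IsDescendant p y z ∨ IsDescendant p z y :=
  ReflTransGen.total_of_right_unique (fun _ _ _ hb hc => hb.symm.trans hc) hy hz

/-- If `p x` leads back to `x`, the orbit of `x` is a cycle through `x`; it contains the root,
whose only descendant is itself. -/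
theorem IsParentMap.eq_root_of_isDescendant_map (hp : IsParentMap p r)
    (h : IsDescendant p (p x) x) : x = r := by
  have back : ∀ y, IsDescendant p x y → IsDescendant p y x := by
    intro y hy
    induction hy with
    | refl => rfl
    | tail _ hstep ih =>
      rcases ih.cases_head with rfl | ⟨z, hz, hzx⟩
      · exact hstep ▸ h
      · exact hstep ▸ hz ▸ hzx
  exact (back r (hp.isDescendant_root x)).eq_of_isFixedPt hp.map_root

theorem IsParentMap.map_ne_self (hp : IsParentMap p r) (hx : x ≠ r) : p x ≠ x :=
  fun h => hx (hp.eq_root_of_isDescendant_map (by rw [h]))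

theorem IsParentMap.map_map_ne_self (hp : IsParentMap p r) (hx : x ≠ r) : p (p x) ≠ x :=
  fun h => hx (hp.eq_root_of_isDescendant_map (.single h))

theorem IsParentMap.eq_of_isDescendant_of_map_eq_root (hp : IsParentMap p r) (hc : p c = r)
    (hy : y ≠ r) (h : IsDescendant p c y) : c = y := by
  rcases h.cases_head with hcy | ⟨z, hz, hzy⟩
  · exact hcy
  · rw [← hz, hc] at hzy
    exact absurd (IsDescendant.eq_of_isFixedPt hp.map_root hzy) hy

section Update

variable [DecidableEq α]

theorem IsDescendant.update_of_not_isDescendant (h : IsDescendant p x z)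
    (hc : ¬IsDescendant p x c) : IsDescendant (update p c w) x z := by
  induction h using ReflTransGen.head_induction_on with
  | refl => rfl
  | @head x y hxy _ ih =>
    have hxc : x ≠ c := by rintro rfl; exact hc .refl
    refine .head ?_ (ih fun hyc => hc (.head hxy hyc))
    rw [update_of_ne hxc, hxy]

theorem IsDescendant.update_of_isDescendant_update (h : IsDescendant p x z)
    (hc : IsDescendant (update p c w) c z) : IsDescendant (update p c w) x z := by
  induction h using ReflTransGen.head_induction_on with
  | refl => rfl
  | @head x y hxy _ ih =>
    by_cases hxc : x = c
    · exact hxc ▸ hc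
    · exact .head (by rw [update_of_ne hxc, hxy]) ih

theorem IsDescendant.of_update (h : IsDescendant (update p c w) x c) : IsDescendant p x c := by
  induction h using ReflTransGen.head_induction_on with
  | refl => rfl
  | @head x y hxy _ ih =>
    by_cases hxc : x = c
    · exact hxc ▸ .refl
    · exact .head (by rwa [update_of_ne hxc] at hxy) ih

theorem IsParentMap.update_of_isDescendant_root (hp : IsParentMap p r) (hc : c ≠ r)
    (hcr : IsDescendant (update p c w) c r) : IsParentMap (update p c w) r :=
  ⟨by rw [update_of_ne hc.symm, hp.map_root],
    fun x => (hp.isDescendant_root x).update_of_isDescendant_update hcr⟩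

theorem IsParentMap.update_of_not_isDescendant (hp : IsParentMap p r) (hc : c ≠ r)
    (hw : ¬IsDescendant p w c) : IsParentMap (update p c w) r :=
  hp.update_of_isDescendant_root hc
    (.head (update_self c w p) ((hp.isDescendant_root w).update_of_not_isDescendant hw))

theorem IsParentMap.update_root (hp : IsParentMap p r) (hc : c ≠ r) :
    IsParentMap (update p c r) r :=
  hp.update_of_isDescendant_root hc (.single (update_self c r p))

theorem IsParentMap.not_isDescendant_update_root (hp : IsParentMap p r) (hc : c ≠ r) :
    ¬IsDescendant (update p c r) (p c) c :=
  fun h => hc (hp.eq_root_of_isDescendant_map h.of_update)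

end Update

end ParentMap

theorem Nat.choose_mul_pow_mul_eq {n v : ℕ} (hv : 1 ≤ v) (hvn : v ≤ n) :
    n.choose v * (n + 1) ^ (n - v) * ((n + 1) * v) =
      n.choose (v - 1) * (n + 1) ^ (n + 1 - v) * (n + 1 - v) := by
  obtain ⟨u, rfl⟩ : ∃ u, v = u + 1 := ⟨v - 1, by omega⟩
  obtain ⟨j, rfl⟩ : ∃ j, n = u + 1 + j := ⟨n - (u + 1), by omega⟩
  have h := Nat.choose_succ_right_eq (u + 1 + j) u
  rw [show u + 1 + j - u = j + 1 by omega] at h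
  rw [show u + 1 + j - (u + 1) = j by omega, show u + 1 + j + 1 - (u + 1) = j + 1 by omega,
    Nat.add_sub_cancel]
  calc (u + 1 + j).choose (u + 1) * (u + 1 + j + 1) ^ j * ((u + 1 + j + 1) * (u + 1))
      = (u + 1 + j).choose (u + 1) * (u + 1) * (u + 1 + j + 1) ^ (j + 1) := by ring
    _ = (u + 1 + j).choose u * (u + 1 + j + 1) ^ (j + 1) * (j + 1) := by rw [h]; ring

section Counting

variable {α : Type*} [Fintype α] [DecidableEq α] {p : α → α} {r c w x : α}

def rootChildren (p : α → α) (r : α) : Finset α := {x ∈ univ.erase r | p x = r}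

theorem mem_rootChildren : x ∈ rootChildren p r ↔ x ≠ r ∧ p x = r := by
  simp [rootChildren]

theorem rootChildren_update_of_ne (hw : w ≠ r) :
    rootChildren (update p c w) r = (rootChildren p r).erase c := by
  ext x
  by_cases hxc : x = c
  · simp [hxc, mem_rootChildren, hw]
  · simp [mem_rootChildren, hxc]

theorem rootChildren_update_root (hc : c ≠ r) :
    rootChildren (update p c r) r = insert c (rootChildren p r) := by
  ext x
  by_cases hxc : x = c
  · simp [hxc, mem_rootChildren, hc]
  · simp [mem_rootChildren, hxc]

theorem card_rootChildren_add_card_filter_map_ne_root :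
    #(rootChildren p r) + #{x ∈ univ.erase r | p x ≠ r} = Fintype.card α - 1 := by
  rw [rootChildren, card_filter_add_card_filter_not, card_erase_of_mem (mem_univ r), card_univ]

theorem IsParentMap.existsUnique_mem_rootChildren_isDescendant (hp : IsParentMap p r)
    (hx : x ≠ r) :
    ∃! c, c ∈ rootChildren p r ∧ IsDescendant p x c := by
  obtain ⟨c, hc, hxc⟩ : ∃ c ∈ rootChildren p r, IsDescendant p x c := by
    induction hp.isDescendant_root x using ReflTransGen.head_induction_on with
    | refl => exact absurd rfl hx
    | @head x y hxy _ ih =>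
      by_cases hy : y = r
      · exact ⟨x, mem_rootChildren.2 ⟨hx, hxy.trans hy⟩, .refl⟩
      · obtain ⟨c, hc, hyc⟩ := ih hy
        exact ⟨c, hc, .head hxy hyc⟩
  refine ⟨c, ⟨hc, hxc⟩, fun d ⟨hd, hxd⟩ => ?_⟩
  rw [mem_rootChildren] at hc hd
  rcases hxc.total hxd with hcd | hdc
  · exact (hp.eq_of_isDescendant_of_map_eq_root hc.2 hd.1 hcd).symm
  · exact hp.eq_of_isDescendant_of_map_eq_root hd.2 hc.1 hdc

/-- The pairs `(c, w)` such that the subtree hanging from the root child `c` may be moved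
below the vertex `w`, which lies outside it. -/
noncomputable def regraftings (p : α → α) (r : α) : Finset (α × α) :=
  {cw ∈ rootChildren p r ×ˢ univ.erase r | ¬IsDescendant p cw.2 cw.1}

theorem IsParentMap.card_regraftings (hp : IsParentMap p r) :
    #(regraftings p r) = (Fintype.card α - 1) * (#(rootChildren p r) - 1) := by
  have hanc : #{cw ∈ rootChildren p r ×ˢ univ.erase r | IsDescendant p cw.2 cw.1} =
      #(univ.erase r) := by
    refine card_nbij Prod.snd (fun cw hcw => (mem_product.1 (mem_filter.1 hcw).1).2) ?_ ?_
    · rintro ⟨c, x⟩ hc ⟨d, y⟩ hd (rfl : x = y)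
      simp only [coe_filter, mem_product, mem_erase, mem_univ, Set.mem_ofPred_eq] at hc hd
      obtain ⟨_, _, huniq⟩ := hp.existsUnique_mem_rootChildren_isDescendant hc.1.2.1
      rw [huniq c ⟨hc.1.1, hc.2⟩, huniq d ⟨hd.1.1, hd.2⟩]
    · intro x hx
      obtain ⟨c, hc, -⟩ :=
        hp.existsUnique_mem_rootChildren_isDescendant (ne_of_mem_erase (mem_coe.1 hx))
      exact ⟨(c, x), by simp_all, rfl⟩
  have := card_filter_add_card_filter_not (s := rootChildren p r ×ˢ univ.erase r)
    (fun cw => IsDescendant p cw.2 cw.1)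
  rw [card_product, hanc, card_erase_of_mem (mem_univ r), card_univ] at this
  rw [regraftings, Nat.mul_sub_one, mul_comm]
  omega

noncomputable def parentMaps (r : α) (v : ℕ) : Finset (α → α) :=
  {p | IsParentMap p r ∧ #(rootChildren p r) = v}

theorem mem_parentMaps {v : ℕ} :
    p ∈ parentMaps r v ↔ IsParentMap p r ∧ #(rootChildren p r) = v := by
  simp [parentMaps]

/-- Regrafting the subtree of the root child `c` below `w` is undone by hanging `c` back on the
root; the result is a map with one root child less together with a marked vertex `c` whose
parent `w` is not the root. -/
theorem card_sigma_regraftings_eq (v : ℕ) :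
    #((parentMaps r (v + 1)).sigma fun p => regraftings p r) =
      #((parentMaps r v).sigma fun q => {x ∈ univ.erase r | q x ≠ r}) := by
  refine card_nbij' (fun t => ⟨update t.1 t.2.1 t.2.2, t.2.1⟩)
    (fun t => ⟨update t.1 t.2 r, t.2, t.1 t.2⟩) ?_ ?_ ?_ ?_
  · rintro ⟨p, c, w⟩ h
    simp only [coe_sigma, Set.mem_sigma_iff, mem_coe, mem_parentMaps, regraftings, mem_filter,
      mem_product, mem_erase, mem_univ] at h ⊢
    obtain ⟨⟨hp, hv⟩, ⟨hc, hw, -⟩, hwc⟩ := h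
    have hcr := (mem_rootChildren.1 hc).1
    refine ⟨⟨hp.update_of_not_isDescendant hcr hwc, ?_⟩, ⟨hcr, trivial⟩, by simpa using hw⟩
    rw [rootChildren_update_of_ne hw, card_erase_of_mem hc, hv, Nat.add_sub_cancel]
  · rintro ⟨q, x⟩ h
    simp only [coe_sigma, Set.mem_sigma_iff, mem_coe, mem_parentMaps, regraftings, mem_filter,
      mem_product, mem_erase, mem_univ] at h ⊢
    obtain ⟨⟨hq, hv⟩, ⟨hx, -⟩, hqx⟩ := h
    have hx' : x ∉ rootChildren q r := fun h => hqx (mem_rootChildren.1 h).2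
    refine ⟨⟨hq.update_root hx, ?_⟩, ⟨mem_rootChildren.2 ⟨hx, update_self x r q⟩, hqx, trivial⟩,
      hq.not_isDescendant_update_root hx⟩
    rw [rootChildren_update_root hx, card_insert_of_notMem hx', hv]
  · rintro ⟨p, c, w⟩ h
    simp only [coe_sigma, Set.mem_sigma_iff, mem_coe, mem_parentMaps, regraftings, mem_filter,
      mem_product] at h
    have hpc := (mem_rootChildren.1 h.2.1.1).2
    simp [← hpc]
  · rintro ⟨q, x⟩ -
    simp

theorem card_parentMaps_succ_mul (v : ℕ) :
    #(parentMaps r (v + 1)) * ((Fintype.card α - 1) * v) =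
      #(parentMaps r v) * (Fintype.card α - 1 - v) := by
  calc #(parentMaps r (v + 1)) * ((Fintype.card α - 1) * v)
      = #((parentMaps r (v + 1)).sigma fun p => regraftings p r) := by
        rw [card_sigma, ← smul_eq_mul, ← sum_const]
        refine sum_congr rfl fun p hp => ?_
        obtain ⟨hp, hv⟩ := mem_parentMaps.1 hp
        rw [hp.card_regraftings, hv, Nat.add_sub_cancel]
    _ = #((parentMaps r v).sigma fun q => {x ∈ univ.erase r | q x ≠ r}) :=
        card_sigma_regraftings_eq v
    _ = #(parentMaps r v) * (Fintype.card α - 1 - v) := by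
        rw [card_sigma, ← smul_eq_mul, ← sum_const]
        refine sum_congr rfl fun q hq => ?_
        have := card_rootChildren_add_card_filter_map_ne_root (p := q) (r := r)
        rw [(mem_parentMaps.1 hq).2] at this
        omega

theorem card_rootChildren_le : #(rootChildren p r) ≤ Fintype.card α - 1 := by
  rw [← card_rootChildren_add_card_filter_map_ne_root (r := r) (p := p)]
  exact Nat.le_add_right _ _

theorem parentMaps_eq_empty {v : ℕ} (hv : Fintype.card α - 1 < v) : parentMaps r v = ∅ :=
  eq_empty_of_forall_notMem fun _ hp => hv.not_ge ((mem_parentMaps.1 hp).2 ▸ card_rootChildren_le)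

theorem parentMaps_card_sub_one : parentMaps r (Fintype.card α - 1) = {fun _ => r} := by
  ext p
  rw [mem_parentMaps, mem_singleton]
  constructor
  · rintro ⟨hp, hcard⟩
    have hall : rootChildren p r = univ.erase r :=
      eq_of_subset_of_card_le (filter_subset _ _)
        (by rw [hcard, card_erase_of_mem (mem_univ r), card_univ])
    funext x
    by_cases hx : x = r
    · exact hx ▸ hp.map_root
    · exact (mem_rootChildren.1 (hall ▸ mem_erase.2 ⟨hx, mem_univ x⟩)).2
  · rintro rfl
    refine ⟨⟨rfl, fun x => .single rfl⟩, ?_⟩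
    rw [rootChildren, filter_true_of_mem fun _ _ => rfl, card_erase_of_mem (mem_univ r), card_univ]

theorem card_parentMaps {n v : ℕ} (r : α) (hn : Fintype.card α = n + 2) (hv : 1 ≤ v) :
    #(parentMaps r v) = n.choose (v - 1) * (n + 1) ^ (n + 1 - v) := by
  have hN : Fintype.card α - 1 = n + 1 := by omega
  rcases lt_or_ge (n + 1) v with hlt | hle
  · rw [parentMaps_eq_empty (by omega), Nat.choose_eq_zero_of_lt (by omega)]
    simp
  obtain ⟨j, hj⟩ : ∃ j, n + 1 = v + j := ⟨n + 1 - v, by omega⟩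
  induction j generalizing v with
  | zero =>
    obtain rfl : v = n + 1 := by omega
    have htop := parentMaps_card_sub_one (r := r)
    rw [hN] at htop
    simp [htop]
  | succ j ih =>
    have hrec := card_parentMaps_succ_mul (r := r) v
    rw [ih (by omega) (by omega) (by omega), hN] at hrec
    rw [Nat.add_sub_cancel, Nat.add_sub_add_right, Nat.choose_mul_pow_mul_eq hv (by omega)] at hrec
    exact (Nat.eq_of_mul_eq_mul_right (by omega) hrec).symm

end Counting

section Graph

open SimpleGraph

variable {α : Type*} {p q : α → α} {r x y : α} {G : SimpleGraph α}

def funGraph (p : α → α) : SimpleGraph α := SimpleGraph.fromRel fun x y => p x = y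

theorem funGraph_adj : (funGraph p).Adj x y ↔ x ≠ y ∧ (p x = y ∨ p y = x) := by
  simp [funGraph]

theorem IsDescendant.reachable (h : IsDescendant p x y) : (funGraph p).Reachable x y := by
  induction h with
  | refl => rfl
  | @tail y z _ hyz ih =>
    refine ih.trans ?_
    by_cases h : y = z
    · rw [h]
    · exact (funGraph_adj.2 ⟨h, .inl hyz⟩).reachable

theorem IsParentMap.connected (hp : IsParentMap p r) : (funGraph p).Connected :=
  (connected_iff _).2 ⟨fun x y => (hp.isDescendant_root x).reachable.trans
    (hp.isDescendant_root y).reachable.symm, ⟨r⟩⟩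

theorem IsParentMap.edgeSet_funGraph (hp : IsParentMap p r) :
    (funGraph p).edgeSet = (fun x => s(x, p x)) '' {r}ᶜ := by
  ext e
  constructor
  · induction e using Sym2.ind with | _ a b => ?_
    rw [mem_edgeSet, funGraph_adj]
    rintro ⟨hab, rfl | rfl⟩
    · exact ⟨a, fun ha => hab (by rw [ha, hp.map_root]), rfl⟩
    · exact ⟨b, fun hb => hab (by rw [hb, hp.map_root]), Sym2.eq_swap⟩
  · rintro ⟨x, hx, rfl⟩
    exact funGraph_adj.2 ⟨(hp.map_ne_self hx).symm, .inl rfl⟩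

theorem IsParentMap.injOn_mk_map (hp : IsParentMap p r) :
    Set.InjOn (fun x => s(x, p x)) {r}ᶜ := by
  intro x _ y hy h
  rcases Sym2.eq_iff.1 h with ⟨hxy, -⟩ | ⟨hxy, hyx⟩
  · exact hxy
  · exact absurd (by rw [← hxy, hyx]) (hp.map_map_ne_self hy)

theorem IsParentMap.isTree [Finite α] (hp : IsParentMap p r) : (funGraph p).IsTree := by
  refine isTree_iff_connected_and_card.2 ⟨hp.connected, ?_⟩
  rw [hp.edgeSet_funGraph, Nat.card_image_of_injOn hp.injOn_mk_map, Nat.card_coe_set_eq,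
    ← Set.ncard_singleton r, Set.ncard_compl_add_ncard]

theorem IsParentMap.degree_funGraph_root [Fintype α] [DecidableEq α] (hp : IsParentMap p r) :
    (funGraph p).degree r = #(rootChildren p r) := by
  rw [← card_neighborFinset_eq_degree]
  congr 1
  ext x
  rw [mem_neighborFinset, funGraph_adj, mem_rootChildren, hp.map_root]
  constructor
  · rintro ⟨hrx, h | h⟩
    · exact absurd h hrx
    · exact ⟨Ne.symm hrx, h⟩
  · rintro ⟨hxr, h⟩
    exact ⟨Ne.symm hxr, .inr h⟩

/-- Where `p` and `q` differ at `x`, the edge from `x` to `q x` of their common graph must be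
the `p`-edge from `q x` to `x`, so they differ at `q x` as well; iterating reaches the root,
where they agree. -/
theorem IsParentMap.eq_of_funGraph_eq (hp : IsParentMap p r) (hq : IsParentMap q r)
    (h : funGraph p = funGraph q) : p = q := by
  have step : ∀ x, p x ≠ q x → p (q x) ≠ q (q x) := by
    intro x hx
    have hxr : x ≠ r := fun h => hx (by rw [h, hp.map_root, hq.map_root])
    have hadj : (funGraph p).Adj x (q x) :=
      h ▸ funGraph_adj.2 ⟨(hq.map_ne_self hxr).symm, .inl rfl⟩
    obtain ⟨-, hpx | hpqx⟩ := funGraph_adj.1 hadj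
    · exact absurd hpx hx
    · rw [hpqx]
      exact fun h => hq.map_map_ne_self hxr h.symm
  by_contra hne
  obtain ⟨x, hx⟩ := Function.ne_iff.1 hne
  have hdiff : ∀ y, IsDescendant q x y → p y ≠ q y := by
    intro y hy
    induction hy with
    | refl => exact hx
    | tail _ hyz ih => exact hyz ▸ step _ ih
  exact hdiff r (hq.isDescendant_root x) (by rw [hp.map_root, hq.map_root])

theorem SimpleGraph.Connected.exists_adj_dist_lt (hG : G.Connected) (hx : x ≠ r) :
    ∃ y, G.Adj x y ∧ G.dist y r < G.dist x r := by
  obtain ⟨w, hw⟩ := hG.exists_walk_length_eq_dist x r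
  cases w with
  | nil => exact absurd rfl hx
  | cons hadj w' =>
    exact ⟨_, hadj, by rw [← hw, Walk.length_cons]; exact Nat.lt_succ_of_le (dist_le w')⟩

theorem SimpleGraph.Connected.exists_isParentMap_funGraph_le (hG : G.Connected) (r : α) :
    ∃ p, IsParentMap p r ∧ funGraph p ≤ G := by
  have : ∀ x, ∃ y, (x = r ∧ y = r) ∨ (G.Adj x y ∧ G.dist y r < G.dist x r) := by
    intro x
    by_cases hx : x = r
    · exact ⟨r, .inl ⟨hx, rfl⟩⟩
    · obtain ⟨y, hy⟩ := hG.exists_adj_dist_lt hx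
      exact ⟨y, .inr hy⟩
  choose p hp using this
  have hpr : p r = r := by
    rcases hp r with h | h
    · exact h.2
    · simp at h
  have hadj : ∀ x, x ≠ p x → G.Adj x (p x) := by
    intro x hx
    rcases hp x with ⟨rfl, h⟩ | h
    · exact absurd h.symm hx
    · exact h.1
  refine ⟨p, ⟨hpr, fun x => ?_⟩, fun x y hxy => ?_⟩
  · induction hd : G.dist x r using Nat.strong_induction_on generalizing x with
    | _ n ih =>
      rcases hp x with ⟨rfl, -⟩ | ⟨-, hlt⟩
      · rfl
      · exact .head rfl (ih _ (hd ▸ hlt) _ rfl)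
  · obtain ⟨hne, rfl | rfl⟩ := funGraph_adj.1 hxy
    · exact hadj x hne
    · exact (hadj y hne.symm).symm

theorem SimpleGraph.IsTree.exists_isParentMap_funGraph_eq (hG : G.IsTree) (r : α) :
    ∃ p, IsParentMap p r ∧ funGraph p = G := by
  obtain ⟨p, hp, hle⟩ := hG.connected.exists_isParentMap_funGraph_le r
  exact ⟨p, hp, (isTree_iff_minimal_connected.1 hG).eq_of_le hp.connected hle⟩

theorem card_trees_degree_eq_card_parentMaps [Fintype α] [DecidableEq α] (r : α) (v : ℕ) :
    #{G : SimpleGraph α | G.IsTree ∧ G.degree r = v} = #(parentMaps r v) := by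
  symm
  refine card_bij (fun p _ => funGraph p) ?_ ?_ ?_
  · intro p hp
    obtain ⟨hp, hv⟩ := mem_parentMaps.1 hp
    simp [hp.isTree, hp.degree_funGraph_root, hv]
  · intro p hp q hq h
    exact (mem_parentMaps.1 hp).1.eq_of_funGraph_eq (mem_parentMaps.1 hq).1 h
  · intro G hG
    obtain ⟨hG, hv⟩ := (mem_filter.1 hG).2
    obtain ⟨p, hp, rfl⟩ := hG.exists_isParentMap_funGraph_eq r
    exact ⟨p, mem_parentMaps.2 ⟨hp, hp.degree_funGraph_root ▸ hv⟩, rfl⟩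

end Graph

/-- **Trees in which a fixed vertex has a given degree.** For `m ≥ 2` and
`1 ≤ v ≤ m - 1`, the number of trees on `Fin m` in which the vertex `0`
(playing the role of vertex `1` in `{1, …, m}`) has degree exactly `v` equals
`binomial (m-2) (v-1) * (m-1) ^ (m-1-v)`. -/
theorem card_trees_with_fixed_vertex_degree (m : ℕ) (hm : 2 ≤ m) (v : ℕ)
    (hv1 : 1 ≤ v) :
    (Finset.univ.filter
        (fun G : SimpleGraph (Fin m) =>
          G.IsTree ∧ G.degree (⟨0, by omega⟩ : Fin m) = v)).card
      = Nat.choose (m - 2) (v - 1) * (m - 1) ^ (m - 1 - v) := by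
  obtain ⟨n, rfl⟩ : ∃ n, m = n + 2 := ⟨m - 2, by omega⟩
  rw [card_trees_degree_eq_card_parentMaps, card_parentMaps _ (Fintype.card_fin _) hv1]
  rfl
end

section
/- For all reals s_1 > 0 and s_2 > 0, the double integral over p > 0, q > 0 of e^{-p s_1 - q s_2} / (p + q)^{3/2} dp dq, multiplied by 1/√(2π), equals √2 / (√s_1 + √s_2). -/
open MeasureTheory Real Set Filter ENNReal

/-!
Writing `(p + q)^(-3/2) = (4/√π) ∫₀^∞ x² e^(-(p+q)x²) dx` and integrating out `p` and `q` first
(Tonelli) turns the double integral into `(4/√π) ∫₀^∞ x² / ((s₁ + x²)(s₂ + x²)) dx`.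
With `α = √s₁`, `β = √s₂` the integrand `2x² / ((α² + x²)(β² + x²))` equals
`(α/(α+β)) / (α² + x²) + (β/(α+β)) / (β² + x²) + (x² - αβ) / ((α² + x²)(β² + x²))`,
and the last term integrates to zero because the substitution `x ↦ αβ/x` reverses its sign.
Hence the `x`-integral is `π / (2(α + β))`.
-/

theorem integrable_inv_add_sq {c : ℝ} (hc : 0 < c) : Integrable fun x : ℝ => (c + x ^ 2)⁻¹ := by
  refine ((integrable_inv_one_add_sq.comp_div (sqrt_pos.2 hc).ne').const_mul c⁻¹).congr
    (ae_of_all _ fun x => ?_)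
  field_simp
  rw [sq_sqrt hc.le]

theorem integral_Ioi_inv_add_sq {c : ℝ} (hc : 0 < c) :
    ∫ x in Ioi (0 : ℝ), (c + x ^ 2)⁻¹ = π / (2 * √c) := by
  have hs : 0 < √c := sqrt_pos.2 hc
  have hderiv : ∀ x ∈ Ici (0 : ℝ), HasDerivAt (fun x => arctan (x / √c) / √c) (c + x ^ 2)⁻¹ x := by
    intro x _
    refine ((((hasDerivAt_id' x).div_const √c).arctan).div_const √c).congr_deriv ?_
    field_simp
    rw [sq_sqrt hc.le]
  have hlim : Tendsto (fun x => arctan (x / √c) / √c) atTop (nhds (π / 2 / √c)) :=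
    ((tendsto_nhds_of_tendsto_nhdsWithin tendsto_arctan_atTop).comp
      (tendsto_id.atTop_div_const hs)).div_const _
  rw [integral_Ioi_of_hasDerivAt_of_tendsto' hderiv (integrable_inv_add_sq hc).integrableOn hlim,
    zero_div, arctan_zero, zero_div, sub_zero, div_div]

theorem integral_comp_div_Ioi {E : Type*} [NormedAddCommGroup E] [NormedSpace ℝ E] (f : ℝ → E)
    {c : ℝ} (hc : 0 < c) :
    ∫ x in Ioi (0 : ℝ), (c / x ^ 2) • f (c / x) = ∫ x in Ioi (0 : ℝ), f x := by
  have himage : (fun x => c / x) '' Ioi (0 : ℝ) = Ioi 0 := by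
    ext y
    refine ⟨?_, fun hy => ⟨c / y, div_pos hc hy, div_div_cancel₀ hc.ne'⟩⟩
    rintro ⟨x, hx, rfl⟩
    exact div_pos hc hx
  have hderiv : ∀ x ∈ Ioi (0 : ℝ), HasDerivWithinAt (fun x => c / x) (-(c / x ^ 2)) (Ioi 0) x :=
    fun x hx => ((hasDerivAt_inv (ne_of_gt hx)).const_mul c).hasDerivWithinAt.congr_deriv
      (by field_simp)
  have hinj : InjOn (fun x => c / x) (Ioi 0) := fun x _ y _ hxy =>
    inv_injective (mul_left_cancel₀ hc.ne' (by simpa only [div_eq_mul_inv] using hxy))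
  calc ∫ x in Ioi (0 : ℝ), (c / x ^ 2) • f (c / x)
      = ∫ x in Ioi (0 : ℝ), |-(c / x ^ 2)| • f (c / x) :=
        setIntegral_congr_fun measurableSet_Ioi fun x hx => by
          simp only [abs_neg, abs_of_pos (div_pos hc (pow_pos hx 2))]
    _ = ∫ x in Ioi (0 : ℝ), f x := by
      rw [← integral_image_eq_integral_abs_deriv_smul measurableSet_Ioi hderiv hinj, himage]

theorem integral_Ioi_sq_sub_mul_div_eq_zero {α β : ℝ} (hα : 0 < α) (hβ : 0 < β) :
    ∫ x in Ioi (0 : ℝ), (x ^ 2 - α * β) / ((α ^ 2 + x ^ 2) * (β ^ 2 + x ^ 2)) = 0 := by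
  set h := fun x : ℝ => (x ^ 2 - α * β) / ((α ^ 2 + x ^ 2) * (β ^ 2 + x ^ 2))
  have hanti : ∀ x ∈ Ioi (0 : ℝ), (α * β / x ^ 2) • h (α * β / x) = -h x := by
    intro x hx
    have hx0 : x ≠ 0 := ne_of_gt hx
    simp only [h, smul_eq_mul]
    field_simp
    ring
  have hinv := integral_comp_div_Ioi h (mul_pos hα hβ)
  rw [setIntegral_congr_fun measurableSet_Ioi hanti, integral_neg] at hinv
  linarith

theorem integrable_sq_div_add_sq_mul_add_sq {a b : ℝ} (ha : 0 < a) (hb : 0 ≤ b) :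
    Integrable fun x : ℝ => x ^ 2 / ((a + x ^ 2) * (b + x ^ 2)) := by
  refine (integrable_inv_add_sq ha).mono' (Measurable.aestronglyMeasurable (by fun_prop))
    (ae_of_all _ fun x => ?_)
  calc ‖x ^ 2 / ((a + x ^ 2) * (b + x ^ 2))‖ = (a + x ^ 2)⁻¹ * (x ^ 2 / (b + x ^ 2)) := by
        rw [norm_of_nonneg (by positivity), mul_comm (a + x ^ 2), ← div_div, div_eq_mul_inv,
          mul_comm]
    _ ≤ (a + x ^ 2)⁻¹ * 1 := by gcongr; exact div_le_one_of_le₀ (by linarith) (by positivity)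
    _ = (a + x ^ 2)⁻¹ := mul_one _

theorem integral_Ioi_sq_div_add_sq_mul_add_sq {a b : ℝ} (ha : 0 < a) (hb : 0 < b) :
    ∫ x in Ioi (0 : ℝ), x ^ 2 / ((a + x ^ 2) * (b + x ^ 2)) = π / (2 * (√a + √b)) := by
  obtain ⟨α, hα, rfl⟩ : ∃ α, 0 < α ∧ α ^ 2 = a := ⟨√a, sqrt_pos.2 ha, sq_sqrt ha.le⟩
  obtain ⟨β, hβ, rfl⟩ : ∃ β, 0 < β ∧ β ^ 2 = b := ⟨√b, sqrt_pos.2 hb, sq_sqrt hb.le⟩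
  have hdecomp : ∀ x, (x ^ 2 - α * β) / ((α ^ 2 + x ^ 2) * (β ^ 2 + x ^ 2)) =
      2 * (x ^ 2 / ((α ^ 2 + x ^ 2) * (β ^ 2 + x ^ 2))) - α / (α + β) * (α ^ 2 + x ^ 2)⁻¹ -
        β / (α + β) * (β ^ 2 + x ^ 2)⁻¹ := by
    intro x
    field_simp
    ring
  have hf : IntegrableOn (fun x => x ^ 2 / ((α ^ 2 + x ^ 2) * (β ^ 2 + x ^ 2))) (Ioi 0) :=
    (integrable_sq_div_add_sq_mul_add_sq (by positivity) (by positivity)).integrableOn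
  have hfα : IntegrableOn (fun x => (α ^ 2 + x ^ 2)⁻¹) (Ioi 0) :=
    (integrable_inv_add_sq (by positivity)).integrableOn
  have hfβ : IntegrableOn (fun x => (β ^ 2 + x ^ 2)⁻¹) (Ioi 0) :=
    (integrable_inv_add_sq (by positivity)).integrableOn
  have hzero := integral_Ioi_sq_sub_mul_div_eq_zero hα hβ
  simp_rw [hdecomp] at hzero
  rw [integral_sub (by exact (hf.const_mul 2).sub (hfα.const_mul _)) (hfβ.const_mul _),
    integral_sub (hf.const_mul 2) (hfα.const_mul _), integral_const_mul, integral_const_mul,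
    integral_const_mul,
    integral_Ioi_inv_add_sq (by positivity), integral_Ioi_inv_add_sq (by positivity),
    sqrt_sq hα.le, sqrt_sq hβ.le] at hzero
  rw [sqrt_sq hα.le, sqrt_sq hβ.le]
  field_simp at hzero ⊢
  linarith

theorem lintegral_Ioi_sq_mul_exp_neg_mul_sq {c : ℝ} (hc : 0 < c) :
    ∫⁻ x in Ioi (0 : ℝ), ENNReal.ofReal (x ^ 2 * exp (-(c * x ^ 2))) =
      ENNReal.ofReal (√π / (4 * c ^ ((3 : ℝ) / 2))) := by
  have hint := integrableOn_rpow_mul_exp_neg_mul_sq hc (by norm_num : (-1 : ℝ) < 2)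
  have h := integral_rpow_mul_exp_neg_mul_rpow two_pos (by norm_num : (-1 : ℝ) < 2) hc
  norm_num [Real.rpow_two] at h hint
  rw [← ofReal_integral_eq_lintegral_ofReal hint
    (ae_of_all _ fun x => mul_nonneg (sq_nonneg x) (exp_pos _).le), h,
    show (3 / 2 : ℝ) = 1 / 2 + 1 by norm_num, Gamma_add_one (by norm_num), Gamma_one_half_eq,
    rpow_neg hc.le]
  congr 1
  ring

theorem lintegral_Ioi_exp_neg_mul {c : ℝ} (hc : 0 < c) :
    ∫⁻ p in Ioi (0 : ℝ), ENNReal.ofReal (exp (-(p * c))) = ENNReal.ofReal c⁻¹ := by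
  have hexp : ∀ p : ℝ, exp (-(p * c)) = exp (-c * p) := fun p => by ring_nf
  simp_rw [hexp]
  rw [← ofReal_integral_eq_lintegral_ofReal (integrableOn_exp_mul_Ioi (neg_neg_of_pos hc) 0)
    (ae_of_all _ fun _ => (exp_pos _).le), integral_exp_mul_Ioi (neg_neg_of_pos hc)]
  simp [neg_div]

theorem integral_integral_eq_toReal_lintegral_lintegral {α β : Type*} [MeasurableSpace α]
    [MeasurableSpace β] {μ : Measure α} {ν : Measure β} [SFinite ν] {f : α → β → ℝ}
    (hf : Measurable (Function.uncurry f)) (hf_nonneg : ∀ᵐ x ∂μ, ∀ᵐ y ∂ν, 0 ≤ f x y)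
    (hf_fin : ∫⁻ x, ∫⁻ y, ENNReal.ofReal (f x y) ∂ν ∂μ ≠ ∞) :
    ∫ x, ∫ y, f x y ∂ν ∂μ = (∫⁻ x, ∫⁻ y, ENNReal.ofReal (f x y) ∂ν ∂μ).toReal := by
  have hmeas : Measurable fun x => ∫⁻ y, ENNReal.ofReal (f x y) ∂ν :=
    hf.ennreal_ofReal.lintegral_prod_right'
  rw [← integral_toReal hmeas.aemeasurable (ae_lt_top hmeas hf_fin)]
  refine integral_congr_ae (hf_nonneg.mono fun x hx => ?_)
  exact integral_eq_lintegral_of_nonneg_ae hx (hf.comp measurable_prodMk_left).aestronglyMeasurable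

theorem lintegral_Ioi_lintegral_Ioi_lintegral_exp_neg {μ : Measure ℝ} [SFinite μ]
    {f : ℝ → ℝ≥0∞} {g h : ℝ → ℝ} (hf : Measurable f) (hg : Measurable g) (hh : Measurable h)
    (hg_pos : ∀ᵐ x ∂μ, 0 < g x) (hh_pos : ∀ᵐ x ∂μ, 0 < h x) :
    ∫⁻ p in Ioi (0 : ℝ), ∫⁻ q in Ioi (0 : ℝ), ∫⁻ x, f x * ENNReal.ofReal (exp (-(p * g x))) *
        ENNReal.ofReal (exp (-(q * h x))) ∂μ =
      ∫⁻ x, f x * ENNReal.ofReal (g x)⁻¹ * ENNReal.ofReal (h x)⁻¹ ∂μ := by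
  calc _ = ∫⁻ p in Ioi (0 : ℝ), ∫⁻ x, (∫⁻ q in Ioi (0 : ℝ), f x *
        ENNReal.ofReal (exp (-(p * g x))) * ENNReal.ofReal (exp (-(q * h x)))) ∂μ := by
        refine lintegral_congr fun p => ?_
        rw [lintegral_lintegral_swap (by fun_prop)]
    _ = ∫⁻ p in Ioi (0 : ℝ), ∫⁻ x, f x * ENNReal.ofReal (exp (-(p * g x))) *
        ENNReal.ofReal (h x)⁻¹ ∂μ := by
        refine lintegral_congr fun p => lintegral_congr_ae ?_
        filter_upwards [hh_pos] with x hx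
        rw [lintegral_const_mul _ (by fun_prop), lintegral_Ioi_exp_neg_mul hx]
    _ = ∫⁻ x, (∫⁻ p in Ioi (0 : ℝ), f x * ENNReal.ofReal (exp (-(p * g x))) *
        ENNReal.ofReal (h x)⁻¹) ∂μ := by
        rw [lintegral_lintegral_swap (by fun_prop)]
    _ = _ := by
        refine lintegral_congr_ae ?_
        filter_upwards [hg_pos] with x hx
        simp_rw [mul_right_comm (f x)]
        rw [lintegral_const_mul _ (by fun_prop), lintegral_Ioi_exp_neg_mul hx, mul_right_comm]

theorem ofReal_exp_div_rpow_eq_lintegral {a b p q : ℝ} (hpq : 0 < p + q) :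
    ENNReal.ofReal (exp (-p * a - q * b) / (p + q) ^ ((3 : ℝ) / 2)) =
      ENNReal.ofReal (4 / √π) * ∫⁻ x in Ioi (0 : ℝ), ENNReal.ofReal (x ^ 2) *
        ENNReal.ofReal (exp (-(p * (a + x ^ 2)))) * ENNReal.ofReal (exp (-(q * (b + x ^ 2)))) := by
  have hπ : 0 < √π := sqrt_pos.2 pi_pos
  calc _ = ENNReal.ofReal (4 / √π) * (ENNReal.ofReal (exp (-p * a - q * b)) *
        ENNReal.ofReal (√π / (4 * (p + q) ^ ((3 : ℝ) / 2)))) := by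
        rw [← ofReal_mul (by positivity), ← ofReal_mul (by positivity)]
        congr 1
        field_simp
    _ = _ := by
        rw [← lintegral_Ioi_sq_mul_exp_neg_mul_sq hpq, ← lintegral_const_mul' _ _ ofReal_ne_top]
        congr 1
        refine lintegral_congr fun x => ?_
        rw [← ofReal_mul (by positivity), ← ofReal_mul (by positivity),
          ← ofReal_mul (by positivity), mul_left_comm, mul_assoc, ← exp_add, ← exp_add]
        ring_nf

theorem lintegral_Ioi_lintegral_Ioi_exp_div_rpow {a b : ℝ} (ha : 0 < a) (hb : 0 < b) :
    ∫⁻ p in Ioi (0 : ℝ), ∫⁻ q in Ioi (0 : ℝ),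
        ENNReal.ofReal (exp (-p * a - q * b) / (p + q) ^ ((3 : ℝ) / 2)) =
      ENNReal.ofReal (2 * √π / (√a + √b)) := by
  calc _ = ∫⁻ p in Ioi (0 : ℝ), ∫⁻ q in Ioi (0 : ℝ), ENNReal.ofReal (4 / √π) *
        ∫⁻ x in Ioi (0 : ℝ), ENNReal.ofReal (x ^ 2) * ENNReal.ofReal (exp (-(p * (a + x ^ 2)))) *
          ENNReal.ofReal (exp (-(q * (b + x ^ 2)))) :=
        setLIntegral_congr_fun measurableSet_Ioi fun p hp =>
          setLIntegral_congr_fun measurableSet_Ioi fun q hq =>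
            ofReal_exp_div_rpow_eq_lintegral (add_pos hp hq)
    _ = ENNReal.ofReal (4 / √π) * ∫⁻ x in Ioi (0 : ℝ), ENNReal.ofReal (x ^ 2) *
        ENNReal.ofReal (a + x ^ 2)⁻¹ * ENNReal.ofReal (b + x ^ 2)⁻¹ := by
        simp_rw [lintegral_const_mul' _ _ ofReal_ne_top]
        rw [lintegral_Ioi_lintegral_Ioi_lintegral_exp_neg (by fun_prop) (by fun_prop)
          (by fun_prop) (ae_of_all _ fun x => by positivity) (ae_of_all _ fun x => by positivity)]
    _ = ENNReal.ofReal (4 / √π) * ENNReal.ofReal (π / (2 * (√a + √b))) := by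
        rw [← integral_Ioi_sq_div_add_sq_mul_add_sq ha hb, ofReal_integral_eq_lintegral_ofReal
          (integrable_sq_div_add_sq_mul_add_sq ha hb.le).integrableOn
          (ae_of_all _ fun x => by positivity)]
        congr 1
        refine lintegral_congr fun x => ?_
        rw [← ofReal_mul (by positivity), ← ofReal_mul (by positivity), div_eq_mul_inv, mul_inv,
          mul_assoc]
    _ = _ := by
        rw [← ofReal_mul (by positivity)]
        congr 1
        have hπ : √π ^ 2 = π := sq_sqrt pi_pos.le
        have : 0 < √π := sqrt_pos.2 pi_pos
        field_simp
        rw [hπ]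
        ring

/-- **The edge factor in Kontsevich's formula.** For `s₁, s₂ > 0`,
`(1/√(2π)) ∬_{p,q>0} e^(-p s₁ - q s₂) / (p+q)^(3/2) dp dq = √2 / (√s₁ + √s₂)`. -/
theorem edge_factor_double_integral (s₁ s₂ : ℝ) (hs₁ : 0 < s₁) (hs₂ : 0 < s₂) :
    (1 / Real.sqrt (2 * Real.pi)) *
      ∫ p in Set.Ioi (0 : ℝ), ∫ q in Set.Ioi (0 : ℝ),
        Real.exp (-p * s₁ - q * s₂) / (p + q) ^ ((3 : ℝ) / 2)
    = Real.sqrt 2 / (Real.sqrt s₁ + Real.sqrt s₂) := by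
  have hL := lintegral_Ioi_lintegral_Ioi_exp_div_rpow hs₁ hs₂
  have hnonneg : ∀ᵐ p ∂volume.restrict (Ioi (0 : ℝ)), ∀ᵐ q ∂volume.restrict (Ioi (0 : ℝ)),
      0 ≤ exp (-p * s₁ - q * s₂) / (p + q) ^ ((3 : ℝ) / 2) := by
    filter_upwards [ae_restrict_mem measurableSet_Ioi] with p hp
    filter_upwards [ae_restrict_mem measurableSet_Ioi] with q hq
    have : 0 < p + q := add_pos hp hq
    positivity
  rw [integral_integral_eq_toReal_lintegral_lintegral (by fun_prop) hnonneg (hL ▸ ofReal_ne_top),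
    hL, toReal_ofReal (by positivity), sqrt_mul zero_le_two]
  have h2 : √2 ^ 2 = 2 := sq_sqrt zero_le_two
  have : 0 < √π := sqrt_pos.2 pi_pos
  have : 0 < √2 := sqrt_pos.2 zero_lt_two
  field_simp
  rw [h2]
end
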